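/- Let X and Y be Banach spaces. If x ∈ S_X and y ∈ S_Y are ∇-points, then ‖x⊗y - z‖ = 2 for every denting point z of the unit ball of X ⊗̂_π Y with z ≠ x⊗y. -/

import Mathlib

open scoped ENNReal

variable {X : Type*} [NormedAddCommGroup X] [NormedSpace ℝ X]

/-- The ballSlice of the closed unit ball of `X` determined by the functional `f` and `α`:
`S(f, α) = {y ∈ B_X : f y > 1 - α}`. -/
def ballSlice (f : X →L[ℝ] ℝ) (α : ℝ) : Set X := {y | ‖y‖ ≤ 1 ∧ 1 - α < f y}

/-- `x` is a Daugavet point: `sup_{y ∈ S} ‖x - y‖ = 2` for every ballSlice `S` of `B_X`. -/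
def IsDaugavetPoint (x : X) : Prop :=
  ‖x‖ = 1 ∧ ∀ (f : X →L[ℝ] ℝ) (α : ℝ), ‖f‖ = 1 → 0 < α →
    ∀ ε > (0 : ℝ), ∃ y ∈ ballSlice f α, 2 - ε < ‖x - y‖

/-- `x` is a `∇`-point: `sup_{y ∈ S} ‖x - y‖ = 2` for every ballSlice `S` of `B_X`
not containing `x`. -/
def IsNablaPoint (x : X) : Prop :=
  ‖x‖ = 1 ∧ ∀ (f : X →L[ℝ] ℝ) (α : ℝ), ‖f‖ = 1 → 0 < α → x ∉ ballSlice f α →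
    ∀ ε > (0 : ℝ), ∃ y ∈ ballSlice f α, 2 - ε < ‖x - y‖

/-- `x` is a `𝔇`-point: `sup_{y ∈ S(f,α)} ‖x - y‖ = 2` for every norm-one functional `f`
supporting `x` (i.e. `f x = 1`) and every `α > 0`. -/
def IsDPoint (x : X) : Prop :=
  ‖x‖ = 1 ∧ ∀ (f : X →L[ℝ] ℝ) (α : ℝ), ‖f‖ = 1 → f x = 1 → 0 < α →
    ∀ ε > (0 : ℝ), ∃ y ∈ ballSlice f α, 2 - ε < ‖x - y‖

/-- `x` is a denting point of `B_X`: it belongs to slices of arbitrarily small diameter. -/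
def IsDentingPoint (x : X) : Prop :=
  ‖x‖ ≤ 1 ∧ ∀ ε > (0 : ℝ), ∃ (f : X →L[ℝ] ℝ) (α : ℝ), ‖f‖ = 1 ∧ 0 < α ∧
    x ∈ ballSlice f α ∧ ∀ y ∈ ballSlice f α, ∀ z ∈ ballSlice f α, ‖y - z‖ < ε

/-- `x` is a strongly exposed point of `B_X`: some norm-one functional `f` with `f x = 1`
generates slices containing `x` of arbitrarily small diameter. -/
def IsStronglyExposedPoint (x : X) : Prop :=
  ‖x‖ = 1 ∧ ∃ f : X →L[ℝ] ℝ, ‖f‖ = 1 ∧ f x = 1 ∧ ∀ ε > (0 : ℝ), ∃ α > (0 : ℝ),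
    ∀ y ∈ ballSlice f α, ∀ z ∈ ballSlice f α, ‖y - z‖ < ε


/-- `m : X →L[ℝ] Y →L[ℝ] Z` realizes `Z` as the projective tensor product `X ⊗̂_π Y`:
the closed unit ball of `Z` is the closed convex hull of the elementary tensors of the unit
balls, and every bounded bilinear form on `X × Y` lifts to a functional on `Z` of the same
norm. -/
structure IsProjTensorProduct
    {X Y Z : Type*} [NormedAddCommGroup X] [NormedSpace ℝ X]
    [NormedAddCommGroup Y] [NormedSpace ℝ Y]
    [NormedAddCommGroup Z] [NormedSpace ℝ Z]
    (m : X →L[ℝ] Y →L[ℝ] Z) : Prop where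
  ball_eq : Metric.closedBall (0 : Z) 1 =
    closure (convexHull ℝ {z : Z | ∃ x y, ‖x‖ ≤ 1 ∧ ‖y‖ ≤ 1 ∧ z = m x y})
  lift : ∀ B : X →L[ℝ] Y →L[ℝ] ℝ, ∃ g : Z →L[ℝ] ℝ, ‖g‖ = ‖B‖ ∧ ∀ x y, g (m x y) = B x y

/-!
The tensor `x ⊗ y` is itself a `∇`-point, and a `∇`-point is at distance `2` from every other
denting point: a slice of small diameter around the denting point misses it.

To see that `x ⊗ y` is a `∇`-point, take a slice `S(f, α)` missing it. If the marginal
`r ↦ f (r ⊗ y)` has norm close to `1`, the `∇`-property of `x` in the slice it induces gives `u`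
with `u ⊗ y ∈ S(f, α)` and `‖x ⊗ y - u ⊗ y‖ = ‖x - u‖ ≈ 2`; symmetrically for the other marginal.
Otherwise, starting from some `u ⊗ v ∈ S(f, α)`, apply the `∇`-property of `x` to
`r ↦ f (r ⊗ v)`, getting `u'`, and then that of `y` to `s ↦ -f (u' ⊗ s)`, getting `w'`. Both
marginals being small keeps `x` and `y` out of the slices used, `u' ⊗ (-w')` lies in `S(f, α)`,
and the bilinear form `φ ⊗ ψ`, with `φ` and `ψ` norming `x - u'` and `y - w'`, shows that it is
almost at distance `2` from `x ⊗ y`.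
-/

section NormedSpace

variable {f : X →L[ℝ] ℝ} {x : X}

theorem ballSlice_mono {α β : ℝ} (h : α ≤ β) : ballSlice f α ⊆ ballSlice f β :=
  fun _ hy => ⟨hy.1, by linarith [hy.2]⟩

theorem apply_le_of_notMem_ballSlice {α : ℝ} (hx : ‖x‖ ≤ 1) (h : x ∉ ballSlice f α) :
    f x ≤ 1 - α :=
  not_lt.1 fun hlt => h ⟨hx, hlt⟩

theorem apply_le_norm_mul_norm (f : X →L[ℝ] ℝ) (x : X) : f x ≤ ‖f‖ * ‖x‖ :=
  (le_abs_self (f x)).trans (f.le_opNorm x)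

theorem apply_le_norm_of_norm_le_one (f : X →L[ℝ] ℝ) (hx : ‖x‖ ≤ 1) : f x ≤ ‖f‖ :=
  (apply_le_norm_mul_norm f x).trans (mul_le_of_le_one_right (norm_nonneg f) hx)

theorem neg_norm_le_apply_of_norm_le_one (f : X →L[ℝ] ℝ) (hx : ‖x‖ ≤ 1) : -‖f‖ ≤ f x := by
  have := apply_le_norm_of_norm_le_one f (x := -x) (by rwa [norm_neg])
  rw [map_neg] at this
  linarith

theorem exists_norm_le_one_lt_apply (f : X →L[ℝ] ℝ) {r : ℝ} (hr : r < ‖f‖) :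
    ∃ u : X, ‖u‖ ≤ 1 ∧ r < f u := by
  obtain ⟨u, hu, hru⟩ := f.exists_lt_apply_of_lt_opNorm hr
  rcases lt_abs.1 hru with h | h
  · exact ⟨u, hu.le, h⟩
  · exact ⟨-u, by simpa using hu.le, by simpa using h⟩

theorem exists_dual_sub (p q : X) (hp : ‖p‖ ≤ 1) (hq : ‖q‖ ≤ 1) :
    ∃ φ : X →L[ℝ] ℝ, ‖φ‖ ≤ 1 ∧ ‖p - q‖ - 1 ≤ φ p ∧ φ q ≤ 1 - ‖p - q‖ := by
  obtain ⟨φ, hφ, hφpq⟩ := exists_dual_vector'' ℝ (p - q)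
  have hp' := (apply_le_norm_of_norm_le_one φ hp).trans hφ
  have hq' := (neg_norm_le_apply_of_norm_le_one φ hq).trans' (neg_le_neg hφ)
  simp only [map_sub, RCLike.ofReal_real_eq_id, id] at hφpq
  exact ⟨φ, hφ, by linarith, by linarith⟩

theorem IsNablaPoint.exists_far_of_apply_le (hx : IsNablaPoint x) (hf : f ≠ 0) {b : ℝ}
    (hb : 0 < b) (hfx : f x ≤ ‖f‖ * (1 - b)) {ε : ℝ} (hε : 0 < ε) :
    ∃ u : X, ‖u‖ ≤ 1 ∧ ‖f‖ * (1 - b) < f u ∧ 2 - ε < ‖x - u‖ := by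
  have hf₀ : 0 < ‖f‖ := norm_pos_iff.2 hf
  have happ (w : X) : (‖f‖⁻¹ • f) w = f w / ‖f‖ := by simp [div_eq_inv_mul]
  have hnorm : ‖‖f‖⁻¹ • f‖ = 1 := by
    rw [norm_smul, norm_inv, norm_norm, inv_mul_cancel₀ hf₀.ne']
  have hxS : x ∉ ballSlice (‖f‖⁻¹ • f) b := fun hxS => by
    have := hxS.2
    rw [happ, lt_div_iff₀ hf₀] at this
    linarith
  obtain ⟨u, ⟨hu, huS⟩, hxu⟩ := hx.2 _ b hnorm hb hxS ε hε
  rw [happ, lt_div_iff₀ hf₀] at huS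
  exact ⟨u, hu, by linarith, hxu⟩

theorem IsNablaPoint.norm_sub_eq_two_of_isDentingPoint {u : X} (hx : IsNablaPoint x)
    (hu : IsDentingPoint u) (hne : u ≠ x) : ‖x - u‖ = 2 := by
  refine le_antisymm (by linarith [norm_sub_le x u, hx.1, hu.1])
    (le_of_forall_pos_lt_add fun ε hε => ?_)
  have hd : 0 < ‖x - u‖ := norm_pos_iff.2 (sub_ne_zero.2 hne.symm)
  obtain ⟨δ, hδ, hδd, hδε⟩ : ∃ δ, 0 < δ ∧ δ < ‖x - u‖ ∧ 2 * δ ≤ ε :=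
    ⟨min ‖x - u‖ ε / 2, by positivity, by linarith [min_le_left ‖x - u‖ ε],
      by linarith [min_le_right ‖x - u‖ ε]⟩
  obtain ⟨f, α, hf, hα, huS, hdiam⟩ := hu.2 δ hδ
  have hxS : x ∉ ballSlice f α := fun hxS => (hdiam x hxS u huS).not_ge hδd.le
  obtain ⟨w, hwS, hxw⟩ := hx.2 f α hf hα hxS δ hδ
  linarith [hdiam u huS w hwS, norm_sub_le_norm_sub_add_norm_sub x u w]

end NormedSpace

namespace IsProjTensorProduct

variable {Y Z : Type*} [NormedAddCommGroup Y] [NormedSpace ℝ Y]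
  [NormedAddCommGroup Z] [NormedSpace ℝ Z] {m : X →L[ℝ] Y →L[ℝ] Z}

theorem flip (hm : IsProjTensorProduct m) : IsProjTensorProduct m.flip where
  ball_eq := by
    rw [hm.ball_eq]
    congr 3
    ext z
    simp only [ContinuousLinearMap.flip_apply]
    exact exists_comm.trans (by simp only [and_left_comm])
  lift B := by
    obtain ⟨g, hg, hgm⟩ := hm.lift B.flip
    exact ⟨g, hg.trans B.opNorm_flip, fun y x => hgm x y⟩

theorem norm_apply_apply_le_one (hm : IsProjTensorProduct m) {r : X} {s : Y} (hr : ‖r‖ ≤ 1)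
    (hs : ‖s‖ ≤ 1) : ‖m r s‖ ≤ 1 := by
  have : m r s ∈ Metric.closedBall (0 : Z) 1 := by
    rw [hm.ball_eq]
    exact subset_closure (subset_convexHull ℝ _ ⟨r, s, hr, hs, rfl⟩)
  simpa using this

theorem opNorm_le_one (hm : IsProjTensorProduct m) : ‖m‖ ≤ 1 :=
  ContinuousLinearMap.opNorm_le_of_unit_norm zero_le_one fun _ hr =>
    ContinuousLinearMap.opNorm_le_of_unit_norm zero_le_one fun _ hs =>
      hm.norm_apply_apply_le_one hr.le hs.le

theorem exists_lift_mul (hm : IsProjTensorProduct m) {φ : X →L[ℝ] ℝ} {ψ : Y →L[ℝ] ℝ}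
    (hφ : ‖φ‖ ≤ 1) (hψ : ‖ψ‖ ≤ 1) :
    ∃ G : Z →L[ℝ] ℝ, ‖G‖ ≤ 1 ∧ ∀ r s, G (m r s) = φ r * ψ s := by
  obtain ⟨G, hG, hGm⟩ := hm.lift (φ.smulRight ψ)
  refine ⟨G, ?_, fun r s => by simp [hGm]⟩
  rw [hG, ContinuousLinearMap.norm_smulRight_apply]
  exact mul_le_one₀ hφ (norm_nonneg ψ) hψ

theorem norm_apply_apply (hm : IsProjTensorProduct m) (r : X) (s : Y) :
    ‖m r s‖ = ‖r‖ * ‖s‖ := by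
  refine le_antisymm ?_ ?_
  · calc ‖m r s‖ ≤ ‖m‖ * ‖r‖ * ‖s‖ := m.le_opNorm₂ r s
      _ ≤ ‖r‖ * ‖s‖ := by
        rw [mul_assoc]; exact mul_le_of_le_one_left (by positivity) hm.opNorm_le_one
  · obtain ⟨φ, hφ, hφr⟩ := exists_dual_vector'' ℝ r
    obtain ⟨ψ, hψ, hψs⟩ := exists_dual_vector'' ℝ s
    obtain ⟨G, hG, hGm⟩ := hm.exists_lift_mul hφ hψ
    calc ‖r‖ * ‖s‖ = G (m r s) := by simp [hGm, hφr, hψs]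
      _ ≤ ‖G‖ * ‖m r s‖ := apply_le_norm_mul_norm G _
      _ ≤ ‖m r s‖ := mul_le_of_le_one_left (norm_nonneg _) hG

theorem norm_apply_le (hm : IsProjTensorProduct m) (r : X) : ‖m r‖ ≤ ‖r‖ :=
  ContinuousLinearMap.opNorm_le_bound _ (norm_nonneg r) fun s => (hm.norm_apply_apply r s).le

theorem exists_lt_apply_apply (hm : IsProjTensorProduct m) (f : Z →L[ℝ] ℝ) {r : ℝ}
    (hr : r < ‖f‖) : ∃ u v, ‖u‖ ≤ 1 ∧ ‖v‖ ≤ 1 ∧ r < f (m u v) := by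
  by_contra! h
  obtain ⟨w, hw, hrw⟩ := exists_norm_le_one_lt_apply f hr
  have hsub : closure (convexHull ℝ {z : Z | ∃ u v, ‖u‖ ≤ 1 ∧ ‖v‖ ≤ 1 ∧ z = m u v}) ⊆
      {z | f z ≤ r} := by
    refine closure_minimal (convexHull_min ?_ ?_) (isClosed_le f.continuous continuous_const)
    · rintro _ ⟨u, v, hu, hv, rfl⟩
      exact h u v hu hv
    · exact convex_halfSpace_le f.isLinear r
  rw [← hm.ball_eq] at hsub
  exact (hsub (mem_closedBall_zero_iff.2 hw)).not_gt hrw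

variable {f : Z →L[ℝ] ℝ} {x : X} {y : Y} {α ε : ℝ}

theorem exists_mem_ballSlice_far_of_lt_norm_comp_flip (hm : IsProjTensorProduct m)
    (hx : IsNablaPoint x) (hy : ‖y‖ = 1) (hf : ‖f‖ = 1) (hα : 0 < α) (hα₁ : α ≤ 1)
    (hfxy : f (m x y) ≤ 1 - α) (hF : 1 - α / 4 < ‖f.comp (m.flip y)‖) (hε : 0 < ε) :
    ∃ w ∈ ballSlice f α, 2 - ε < ‖m x y - w‖ := by
  set F := f.comp (m.flip y)
  have hF₁ : ‖F‖ ≤ 1 := by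
    calc ‖F‖ ≤ ‖f‖ * ‖m.flip y‖ := f.opNorm_comp_le _
      _ ≤ 1 := by rw [hf, one_mul, ← hy]; exact hm.flip.norm_apply_le y
  have hFx : F x ≤ ‖F‖ * (1 - α / 2) := by
    change f (m x y) ≤ _
    nlinarith
  obtain ⟨u, hu, hFu, hxu⟩ :=
    hx.exists_far_of_apply_le (fun h => by simp [h] at hF; linarith) (by positivity) hFx hε
  refine ⟨m u y, ⟨hm.norm_apply_apply_le_one hu hy.le, ?_⟩, ?_⟩
  · change 1 - α < F u
    nlinarith
  · rwa [← sub_apply, ← map_sub, hm.norm_apply_apply, hy, mul_one]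

theorem exists_mem_ballSlice_far_of_norm_comp_le (hm : IsProjTensorProduct m)
    (hx : IsNablaPoint x) (hy : IsNablaPoint y) (hf : ‖f‖ = 1) (hα : 0 < α) (hα₁ : α ≤ 1)
    (hF₁ : ‖f.comp (m.flip y)‖ ≤ 1 - α / 4) (hF₂ : ‖f.comp (m x)‖ ≤ 1 - α / 4) (hε : 0 < ε) :
    ∃ w ∈ ballSlice f α, 2 - ε < ‖m x y - w‖ := by
  obtain ⟨c, hc, hc₁, hcε⟩ : ∃ c, 0 < c ∧ c ≤ 1 / 4 ∧ 4 * c ≤ ε :=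
    ⟨min ε 1 / 4, by positivity, by linarith [min_le_right ε 1], by linarith [min_le_left ε 1]⟩
  obtain ⟨u, v, hu, hv, huv⟩ := hm.exists_lt_apply_apply f (r := 1 - α / 16) (by linarith)
  set F := f.comp (m.flip v)
  have hF : 1 - α / 16 < ‖F‖ := huv.trans_le (apply_le_norm_of_norm_le_one F hu)
  have hFx : F x ≤ ‖F‖ * (1 - α / 16) := by
    have : F x ≤ ‖f.comp (m x)‖ := apply_le_norm_of_norm_le_one (f.comp (m x)) hv
    nlinarith
  obtain ⟨u', hu', hFu', hxu'⟩ :=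
    hx.exists_far_of_apply_le (fun h => by simp [h] at hF; linarith) (by positivity) hFx hc
  -- The sign makes `φ u' * ψ w'` below positive: `u'` and `w'` are far from `x` and `y`.
  set H := -f.comp (m u')
  have hH : 1 - α / 8 < ‖H‖ := by
    have : -‖H‖ ≤ H v := neg_norm_le_apply_of_norm_le_one H hv
    change -‖H‖ ≤ -F u' at this
    nlinarith
  have hHy : H y ≤ ‖H‖ * (1 - α / 16) := by
    have : -‖f.comp (m.flip y)‖ ≤ f (m u' y) :=
      neg_norm_le_apply_of_norm_le_one (f.comp (m.flip y)) hu'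
    change -f (m u' y) ≤ _
    nlinarith
  obtain ⟨w', hw', hHw', hyw'⟩ :=
    hy.exists_far_of_apply_le (fun h => by simp [h] at hH; linarith) (by positivity) hHy hc
  refine ⟨m u' (-w'), ⟨hm.norm_apply_apply_le_one hu' (by rwa [norm_neg]), ?_⟩, ?_⟩
  · change _ < -f (m u' w') at hHw'
    rw [map_neg, map_neg]
    nlinarith [mul_lt_mul_of_pos_right hH (show 0 < 1 - α / 16 by linarith)]
  · obtain ⟨φ, hφ, hφx, hφu'⟩ := exists_dual_sub x u' hx.1.le hu'
    obtain ⟨ψ, hψ, hψy, hψw'⟩ := exists_dual_sub y w' hy.1.le hw'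
    obtain ⟨G, hG, hGm⟩ := hm.exists_lift_mul hφ hψ
    calc 2 - ε < φ x * ψ y + φ u' * ψ w' := by nlinarith
      _ = G (m x y - m u' (-w')) := by simp [hGm]
      _ ≤ ‖G‖ * ‖m x y - m u' (-w')‖ := apply_le_norm_mul_norm G _
      _ ≤ ‖m x y - m u' (-w')‖ := mul_le_of_le_one_left (norm_nonneg _) hG

theorem exists_mem_ballSlice_far (hm : IsProjTensorProduct m) (hx : IsNablaPoint x)
    (hy : IsNablaPoint y) (hf : ‖f‖ = 1) (hα : 0 < α) (hα₁ : α ≤ 1) (hfxy : f (m x y) ≤ 1 - α)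
    (hε : 0 < ε) : ∃ w ∈ ballSlice f α, 2 - ε < ‖m x y - w‖ := by
  by_cases hF₁ : 1 - α / 4 < ‖f.comp (m.flip y)‖
  · exact hm.exists_mem_ballSlice_far_of_lt_norm_comp_flip hx hy.1 hf hα hα₁ hfxy hF₁ hε
  by_cases hF₂ : 1 - α / 4 < ‖f.comp (m x)‖
  · simpa using hm.flip.exists_mem_ballSlice_far_of_lt_norm_comp_flip hy hx.1 hf hα hα₁ hfxy
      (by rwa [ContinuousLinearMap.flip_flip]) hε
  exact hm.exists_mem_ballSlice_far_of_norm_comp_le hx hy hf hα hα₁ (not_lt.1 hF₁)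
    (not_lt.1 hF₂) hε

theorem isNablaPoint_apply_apply (hm : IsProjTensorProduct m) (hx : IsNablaPoint x)
    (hy : IsNablaPoint y) : IsNablaPoint (m x y) := by
  refine ⟨by rw [hm.norm_apply_apply, hx.1, hy.1, one_mul], fun f α hf hα hS ε hε => ?_⟩
  have hfxy := apply_le_of_notMem_ballSlice (hm.norm_apply_apply_le_one hx.1.le hy.1.le) hS
  obtain ⟨w, hwS, hw⟩ := hm.exists_mem_ballSlice_far hx hy hf (lt_min hα one_pos)
    (min_le_right α 1) (hfxy.trans (by linarith [min_le_left α 1])) hε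
  exact ⟨w, ballSlice_mono (min_le_left α 1) hwS, hw⟩

end IsProjTensorProduct

theorem dist_tmul_denting_eq_two_of_nabla_general
    {X Y Z : Type*} [NormedAddCommGroup X] [NormedSpace ℝ X]
    [NormedAddCommGroup Y] [NormedSpace ℝ Y]
    [NormedAddCommGroup Z] [NormedSpace ℝ Z]
    (m : X →L[ℝ] Y →L[ℝ] Z) (hm : IsProjTensorProduct m)
    {x : X} {y : Y} (hx : IsNablaPoint x) (hy : IsNablaPoint y)
    {z : Z} (hz : IsDentingPoint z) (hne : z ≠ m x y) :
    ‖m x y - z‖ = 2 :=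
  (hm.isNablaPoint_apply_apply hx hy).norm_sub_eq_two_of_isDentingPoint hz hne

/-- If `x ∈ S_X` and `y ∈ S_Y` are `∇`-points, then `‖x ⊗ y - z‖ = 2` for every denting
point `z` of the unit ball of the projective tensor product `X ⊗̂_π Y` with `z ≠ x ⊗ y`. -/
theorem dist_tmul_denting_eq_two_of_nabla
    {X Y Z : Type*} [NormedAddCommGroup X] [NormedSpace ℝ X] [CompleteSpace X]
    [NormedAddCommGroup Y] [NormedSpace ℝ Y] [CompleteSpace Y]
    [NormedAddCommGroup Z] [NormedSpace ℝ Z] [CompleteSpace Z]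
    (m : X →L[ℝ] Y →L[ℝ] Z) (hm : IsProjTensorProduct m)
    {x : X} {y : Y} (hx : IsNablaPoint x) (hy : IsNablaPoint y)
    {z : Z} (hz : IsDentingPoint z) (hne : z ≠ m x y) :
    ‖m x y - z‖ = 2 :=
  dist_tmul_denting_eq_two_of_nabla_general m hm hx hy hz hne
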